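/- arXiv:1806.06603 — 2 statements merged into one kernel-verified Lean document; each statement's English description precedes it below -/
import Mathlib

section
/- The permutation x̄ y̅ of P^1(F_17) (a set of 18 points), where x̄ is induced by X(z) = (z+10)/(10z-1) and y̅ by Y(z) = 4/(4z+8), has exactly two orbits under the cyclic group it generates, each of size 9. -/
/-!
`x̄ y̅` is the Möbius map of the matrix `YX = [[6, 13], [16, 15]]` over `F₁₇`; its ninth power is the
identity while its cube fixes no point of `P¹(F₁₇)`. Hence every point has minimal period `9`, every
orbit of `⟨x̄ y̅⟩` has `9` elements, and the `18` points split into exactly two orbits.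
-/

open OnePoint

instance : Fact (Nat.Prime 17) := ⟨by norm_num⟩

/-- The Möbius transformation `z ↦ (a z + b)/(c z + d)` on the projective line
`P¹(F₁₇) = F₁₇ ∪ {∞}`. -/
def mob (a b c d : ZMod 17) (w : OnePoint (ZMod 17)) : OnePoint (ZMod 17) :=
  match w with
  | ∞ => if c = 0 then ∞ else OnePoint.some (a / c)
  | OnePoint.some z =>
      if c * z + d = 0 then ∞ else OnePoint.some ((a * z + b) / (c * z + d))

theorem ZMod.inv_eq_pow_sub_two {p : ℕ} [Fact p.Prime] (hp : p ≠ 2) (a : ZMod p) :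
    a⁻¹ = a ^ (p - 2) := by
  have two_le := (Fact.out : p.Prime).two_le
  rcases eq_or_ne a 0 with rfl | ha
  · rw [inv_zero, zero_pow (by omega)]
  · refine inv_eq_of_mul_eq_one_right ?_
    rw [← pow_succ', ← ZMod.pow_card_sub_one_eq_one ha]
    congr 1
    omega

theorem OnePoint.card_eq_card_add_one (X : Type*) [Finite X] :
    Nat.card (OnePoint X) = Nat.card X + 1 :=
  Finite.card_option

instance {X : Type*} [DecidableEq X] : DecidableEq (OnePoint X) :=
  inferInstanceAs (DecidableEq (Option X))

def Equiv.Perm.ofIterateEqId {α : Type*} (f : α → α) (n : ℕ) (h : f^[n + 1] = id) :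
    Equiv.Perm α where
  toFun := f
  invFun := f^[n]
  left_inv x := (Function.iterate_succ_apply f n x).symm.trans (congrFun h x)
  right_inv x := (Function.iterate_succ_apply' f n x).symm.trans (congrFun h x)

namespace MulAction

variable {G X : Type*} [Group G] [MulAction G X]

theorem card_orbit_zpowers_eq_prime_pow {g : G} {x : X} {p k : ℕ} [Fact p.Prime]
    (hk : ¬Function.IsPeriodicPt (g • ·) (p ^ k) x)
    (hk1 : Function.IsPeriodicPt (g • ·) (p ^ (k + 1)) x) :
    Nat.card (orbit (Subgroup.zpowers g) x) = p ^ (k + 1) := by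
  rw [Nat.card_congr (orbitZPowersEquiv g x), Nat.card_zmod,
    Function.minimalPeriod_eq_prime_pow hk hk1]

theorem card_orbitRel_quotient_mul_eq_card [Finite X] {n : ℕ}
    (h : ∀ x : X, Nat.card (orbit G x) = n) :
    Nat.card (orbitRel.Quotient G X) * n = Nat.card X := by
  have : Fintype (orbitRel.Quotient G X) := Fintype.ofFinite _
  rw [Nat.card_congr (selfEquivSigmaOrbits G X), Nat.card_sigma]
  simp only [h, Finset.sum_const, smul_eq_mul, Finset.card_univ, Nat.card_eq_fintype_card]

end MulAction

/-- `mob` with `u / v` computed as `u * v ^ 15`, which the kernel can evaluate. -/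
def mobFermat (a b c d : ZMod 17) (w : OnePoint (ZMod 17)) : OnePoint (ZMod 17) :=
  match w with
  | ∞ => if c = 0 then ∞ else OnePoint.some (a * c ^ 15)
  | OnePoint.some z =>
      if c * z + d = 0 then ∞ else OnePoint.some ((a * z + b) * (c * z + d) ^ 15)

theorem mob_eq_mobFermat : mob = mobFermat := by
  have inv_eq_pow : ∀ u : ZMod 17, u⁻¹ = u ^ 15 := ZMod.inv_eq_pow_sub_two (by norm_num)
  ext a b c d (_ | z) <;> simp [mob, mobFermat, div_eq_mul_inv, inv_eq_pow]

def xy (z : OnePoint (ZMod 17)) : OnePoint (ZMod 17) :=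
  mobFermat 0 4 4 8 (mobFermat 1 10 10 (-1) z)

theorem xy_iterate_nine : xy^[9] = id :=
  funext (by decide)

theorem xy_iterate_three_ne (z : OnePoint (ZMod 17)) : xy^[3] z ≠ z := by
  revert z
  decide

def xyPerm : Equiv.Perm (OnePoint (ZMod 17)) :=
  Equiv.Perm.ofIterateEqId xy 8 xy_iterate_nine

theorem card_orbit_xyPerm (z : OnePoint (ZMod 17)) :
    Nat.card (MulAction.orbit (Subgroup.zpowers xyPerm) z) = 9 :=
  MulAction.card_orbit_zpowers_eq_prime_pow (p := 3) (k := 1)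
    (xy_iterate_three_ne z) (congrFun xy_iterate_nine z)

/-- The permutation of the 18 points of `P¹(F₁₇)` composed from
`X(z) = (z+10)/(10z-1)` and `Y(z) = 4/(4z+8)` has exactly two orbits, each of size 9. -/
theorem stmt_5 :
    ∃ σ : Equiv.Perm (OnePoint (ZMod 17)),
      (∀ z, σ z = mob 0 4 4 8 (mob 1 10 10 (-1) z)) ∧
      Nat.card (Quotient (MulAction.orbitRel (Subgroup.zpowers σ) (OnePoint (ZMod 17)))) = 2 ∧
      ∀ z : OnePoint (ZMod 17),
        Nat.card (MulAction.orbit (Subgroup.zpowers σ) z) = 9 := by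
  refine ⟨xyPerm, fun z => by rw [mob_eq_mobFermat]; rfl, ?_, card_orbit_xyPerm⟩
  have orbits_mul_nine := MulAction.card_orbitRel_quotient_mul_eq_card card_orbit_xyPerm
  rw [OnePoint.card_eq_card_add_one, Nat.card_zmod] at orbits_mul_nine
  exact Nat.eq_of_mul_eq_mul_right (by norm_num) orbits_mul_nine
end

section
/- For every even integer k ≥ 2, the permutations x = (1, 3k/2+1)(k/2+1, k+1) and y = (1,2,…,k)(k+1,k+2,…,2k) of the set {1,…,2k} satisfy: x has order 2, y has order k, and the group generated by xy acts on {1,…,2k} with exactly two orbits. -/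
/-!
Write `k = 2m`. Then `z = xy` moves every point of `{1 … 4m}` one step forward except the block
ends `m, 2m, 3m, 4m`, which go to `2m+1, 3m+1, 1, m+1`; so `z` is the product of the disjoint
`2m`-cycles `(1 … m, 2m+1 … 3m)` and `(m+1 … 2m, 3m+1 … 4m)`. The set `{1 … m} ∪ {2m+1 … 3m}` is
`z`-invariant and separates `1` from `m+1`, while stepping forward reaches every point of
`{1 … 4m}` from `1` or from `m+1`.
-/

/-- `x = (1, 3k/2+1)(k/2+1, k+1)` as a permutation of `ℕ`. -/
def xPerm (k : ℕ) : Equiv.Perm ℕ :=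
  Equiv.swap 1 (3 * k / 2 + 1) * Equiv.swap (k / 2 + 1) (k + 1)

/-- `y = (1,2,…,k)(k+1,k+2,…,2k)` as a permutation of `ℕ`. -/
def yPerm (k : ℕ) : Equiv.Perm ℕ :=
  (List.range' 1 k).formPerm * (List.range' (k + 1) k).formPerm

open Equiv Equiv.Perm

namespace Equiv.Perm

theorem orderOf_swap {α : Type*} [DecidableEq α] {a b : α} (hab : a ≠ b) :
    orderOf (swap a b) = 2 :=
  orderOf_eq_prime (by rw [sq, swap_mul_self]) (by rwa [Ne, swap_eq_one_iff])

theorem SameCycle.iff_of_forall_apply_iff {α : Type*} {f : Perm α} {p : α → Prop}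
    (hp : ∀ a, p (f a) ↔ p a) {a b : α} (h : f.SameCycle a b) : p a ↔ p b := by
  obtain ⟨n, rfl⟩ := h
  induction n using Int.induction_on generalizing a with
  | zero => rfl
  | succ n ih => rw [zpow_add_one, mul_apply, ← ih, hp]
  | pred n ih =>
    rw [zpow_sub_one, mul_apply, ← ih, ← hp (f⁻¹ a), ← mul_apply, mul_inv_cancel, one_apply]

theorem sameCycle_of_forall_apply_eq_succ {f : Perm ℕ} {a c : ℕ} (hac : a ≤ c)
    (h : ∀ b, a ≤ b → b < c → f b = b + 1) : f.SameCycle a c := by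
  induction c, hac using Nat.le_induction with
  | base => exact .rfl
  | succ c hac ih =>
    refine (ih fun b hab hbc => h b hab (by omega)).trans ?_
    rw [← h c hac (by omega)]
    exact sameCycle_apply_right.mpr .rfl

end Equiv.Perm

namespace List

theorem orderOf_formPerm_of_nodup {α : Type*} [DecidableEq α] {l : List α} (hl : l.Nodup)
    (hne : l ≠ []) : orderOf l.formPerm = l.length := by
  have hlen : 0 < l.length := length_pos_iff.mpr hne
  refine (orderOf_eq_iff hlen).mpr
    ⟨formPerm_pow_length_eq_one_of_nodup _ hl, fun d hd hd0 h => ?_⟩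
  have hfix := formPerm_pow_apply_getElem l hl d 0 hlen
  rw [h, Perm.one_apply, zero_add, hl.getElem_inj_iff, Nat.mod_eq_of_lt hd] at hfix
  omega

theorem formPerm_range'_apply (s n a : ℕ) :
    (range' s n).formPerm a =
      if s ≤ a ∧ a < s + n then (if a + 1 = s + n then s else a + 1) else a := by
  by_cases ha : s ≤ a ∧ a < s + n
  · have hi : a - s < (range' s n).length := by rw [length_range']; omega
    have hstep := formPerm_apply_getElem _ nodup_range' (a - s) hi
    simp only [getElem_range'_1, length_range', show s + (a - s) = a by omega] at hstep
    rw [hstep, if_pos ha]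
    split_ifs with hlast
    · rw [show a - s + 1 = n by omega, Nat.mod_self, add_zero]
    · rw [Nat.mod_eq_of_lt (by omega)]
      omega
  · rw [if_neg ha, formPerm_apply_of_notMem (mem_range'_1.not.mpr ha)]

end List

theorem orderOf_yPerm {k : ℕ} (hk : 0 < k) : orderOf (yPerm k) = k := by
  have hdisj : (List.range' 1 k).formPerm.Disjoint (List.range' (k + 1) k).formPerm := by
    intro a
    simp only [List.formPerm_range'_apply]
    split_ifs <;> omega
  have hne : ∀ s, List.range' s k ≠ [] := fun s => by rw [Ne, List.range'_eq_nil_iff]; omega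
  rw [yPerm, hdisj.orderOf, List.orderOf_formPerm_of_nodup List.nodup_range' (hne 1),
    List.orderOf_formPerm_of_nodup List.nodup_range' (hne (k + 1)), List.length_range',
    List.length_range', Nat.lcm_self]

theorem yPerm_apply {k : ℕ} (hk : 0 < k) (a : ℕ) :
    yPerm k a =
      if 1 ≤ a ∧ a ≤ 2 * k then
        (if a = k then 1 else if a = 2 * k then k + 1 else a + 1)
      else a := by
  rw [yPerm, mul_apply, List.formPerm_range'_apply, List.formPerm_range'_apply]
  split_ifs <;> omega

theorem xPerm_two_mul (m : ℕ) :
    xPerm (2 * m) = swap 1 (3 * m + 1) * swap (m + 1) (2 * m + 1) := by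
  rw [xPerm, show 3 * (2 * m) / 2 = 3 * m by omega, show 2 * m / 2 = m by omega]

theorem orderOf_xPerm_two_mul {m : ℕ} (hm : 0 < m) : orderOf (xPerm (2 * m)) = 2 := by
  have hdisj : (swap 1 (3 * m + 1)).Disjoint (swap (m + 1) (2 * m + 1)) :=
    disjoint_swap_swap <| by
      simp only [List.nodup_cons, List.mem_cons, List.not_mem_nil, or_false, not_false_eq_true,
        List.nodup_nil, and_true]
      omega
  rw [xPerm_two_mul, hdisj.orderOf, orderOf_swap (by omega), orderOf_swap (by omega),
    Nat.lcm_self]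

theorem xPerm_mul_yPerm_apply {m : ℕ} (hm : 0 < m) (a : ℕ) :
    (xPerm (2 * m) * yPerm (2 * m)) a =
      if 1 ≤ a ∧ a ≤ 4 * m then
        (if a = m then 2 * m + 1 else if a = 2 * m then 3 * m + 1
          else if a = 3 * m then 1 else if a = 4 * m then m + 1 else a + 1)
      else a := by
  rw [mul_apply, yPerm_apply (by omega), xPerm_two_mul, mul_apply, swap_apply_def,
    swap_apply_def]
  split_ifs <;> omega

theorem not_sameCycle_xPerm_mul_yPerm {m : ℕ} (hm : 0 < m) :
    ¬ (xPerm (2 * m) * yPerm (2 * m)).SameCycle 1 (m + 1) := by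
  intro h
  have hinv := h.iff_of_forall_apply_iff
    (p := fun b => (1 ≤ b ∧ b ≤ m) ∨ (2 * m + 1 ≤ b ∧ b ≤ 3 * m)) fun b => by
      rw [xPerm_mul_yPerm_apply hm]
      split_ifs <;> omega
  omega

theorem sameCycle_xPerm_mul_yPerm {m : ℕ} (hm : 0 < m) {c : ℕ} (hc1 : 1 ≤ c)
    (hc2 : c ≤ 4 * m) :
    (xPerm (2 * m) * yPerm (2 * m)).SameCycle 1 c ∨
      (xPerm (2 * m) * yPerm (2 * m)).SameCycle (m + 1) c := by
  set z := xPerm (2 * m) * yPerm (2 * m)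
  have hz := xPerm_mul_yPerm_apply hm
  have sameBlock : ∀ {a c}, 1 ≤ a → a ≤ c →
      (c ≤ m ∨ m < a ∧ c ≤ 2 * m ∨ 2 * m < a ∧ c ≤ 3 * m ∨ 3 * m < a ∧ c ≤ 4 * m) →
      z.SameCycle a c := fun ha hac hblock =>
    sameCycle_of_forall_apply_eq_succ hac fun b hab hbc => by
      rw [hz]
      split_ifs <;> omega
  have jump : ∀ {a}, z.SameCycle a (z a) := sameCycle_apply_right.mpr .rfl
  have h1 : z.SameCycle 1 (2 * m + 1) := by
    rw [show 2 * m + 1 = z m by rw [hz]; split_ifs <;> omega]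
    exact (sameBlock le_rfl (by omega) (by omega)).trans jump
  have h2 : z.SameCycle (m + 1) (3 * m + 1) := by
    rw [show 3 * m + 1 = z (2 * m) by rw [hz]; split_ifs <;> omega]
    exact (sameBlock (by omega) (by omega) (by omega)).trans jump
  by_cases c ≤ m
  · exact .inl (sameBlock le_rfl hc1 (by omega))
  by_cases c ≤ 2 * m
  · exact .inr (sameBlock (by omega) (by omega) (by omega))
  by_cases c ≤ 3 * m
  · exact .inl (h1.trans (sameBlock (by omega) (by omega) (by omega)))
  · exact .inr (h2.trans (sameBlock (by omega) (by omega) (by omega)))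

/-- For even `k ≥ 2`: `x` has order 2, `y` has order `k`, and `⟨xy⟩` has exactly
two orbits on `{1,…,2k}`. -/
theorem stmt_6 (k : ℕ) (hk : 2 ≤ k) (hk2 : Even k) :
    orderOf (xPerm k) = 2 ∧ orderOf (yPerm k) = k ∧
    ∃ a b, a ∈ Set.Icc 1 (2 * k) ∧ b ∈ Set.Icc 1 (2 * k) ∧
      (¬ ∃ n : ℤ, ((xPerm k * yPerm k) ^ n) a = b) ∧
      ∀ c ∈ Set.Icc 1 (2 * k),
        (∃ n : ℤ, ((xPerm k * yPerm k) ^ n) a = c) ∨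
        (∃ n : ℤ, ((xPerm k * yPerm k) ^ n) b = c) := by
  obtain ⟨m, rfl⟩ := even_iff_two_dvd.mp hk2
  have hm : 0 < m := by omega
  refine ⟨orderOf_xPerm_two_mul hm, orderOf_yPerm (by omega), 1, m + 1,
    ⟨le_rfl, by omega⟩, ⟨by omega, by omega⟩, not_sameCycle_xPerm_mul_yPerm hm,
    fun c hc => sameCycle_xPerm_mul_yPerm hm hc.1 (hc.2.trans_eq (by ring))⟩
end
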